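/- arXiv:0912.1030 — 9 statements merged into one kernel-verified Lean document; each statement's English description precedes it below -/
import Mathlib

section
/- If Y, Z ∈ M₂(ℂ) are nilpotent (Y² = Z² = 0) and (YZ − ZY)² = 0, then (Y + Z)⁴ = YZYZ + ZYZY and Y + Z is nilpotent, and consequently YZ + ZY = 0. -/
open Matrix

lemma ch2 (M : Matrix (Fin 2) (Fin 2) ℂ) :
    M * M - M.trace • M + M.det • 1 = 0 := by
  ext i j
  fin_cases i <;> fin_cases j <;>
    simp [Matrix.mul_apply, Matrix.trace, Matrix.det_fin_two, Fin.sum_univ_two,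
      Matrix.one_apply] <;> ring

lemma sq_zero_of_pow4 (N : Matrix (Fin 2) (Fin 2) ℂ) (h : N ^ 4 = 0) : N ^ 2 = 0 := by
  have hnil : IsNilpotent N := ⟨4, h⟩
  have ht : N.trace = 0 := (Matrix.isNilpotent_trace_of_isNilpotent hnil).eq_zero
  have hd : N.det = 0 := by
    have h4 : N.det ^ 4 = 0 := by rw [← Matrix.det_pow, h]; simp
    exact pow_eq_zero_iff (by norm_num) |>.mp h4
  have hc := ch2 N
  rw [ht, hd] at hc
  simpa [pow_two] using hc

/-- If Y² = Z² = 0 and (YZ − ZY)² = 0 in M₂(ℂ), then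
(Y + Z)⁴ = YZYZ + ZYZY, Y + Z is nilpotent, and YZ + ZY = 0. -/
theorem stmt4 (Y Z : Matrix (Fin 2) (Fin 2) ℂ)
    (hY : Y ^ 2 = 0) (hZ : Z ^ 2 = 0) (hC : (Y * Z - Z * Y) ^ 2 = 0) :
    (Y + Z) ^ 4 = Y * Z * Y * Z + Z * Y * Z * Y ∧
    (Y + Z) ^ 2 = 0 ∧
    Y * Z + Z * Y = 0 := by
  have hY2 : ∀ M : Matrix (Fin 2) (Fin 2) ℂ, Y * (Y * M) = 0 := fun M => by
    rw [← mul_assoc, ← pow_two, hY, zero_mul]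
  have hZ2 : ∀ M : Matrix (Fin 2) (Fin 2) ℂ, Z * (Z * M) = 0 := fun M => by
    rw [← mul_assoc, ← pow_two, hZ, zero_mul]
  have hY2' : Y * Y = 0 := by rw [← pow_two, hY]
  have hZ2' : Z * Z = 0 := by rw [← pow_two, hZ]
  have hs : (Y + Z) ^ 2 = Y * Z + Z * Y := by
    rw [pow_two, add_mul, mul_add, mul_add, hY2', hZ2']
    abel
  have h1 : (Y + Z) ^ 4 = Y * Z * Y * Z + Z * Y * Z * Y := by
    have h4 : (Y + Z) ^ 4 = ((Y + Z) ^ 2) ^ 2 := by rw [← pow_mul]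
    rw [h4, hs, pow_two, add_mul, mul_add, mul_add]
    simp [mul_assoc, hY2, hZ2]
  have hcross : Y * Z * Y * Z + Z * Y * Z * Y = (Y * Z - Z * Y) ^ 2 := by
    rw [pow_two, sub_mul, mul_sub, mul_sub]
    simp [mul_assoc, hY2, hZ2]
  have h40 : (Y + Z) ^ 4 = 0 := by rw [h1, hcross, hC]
  have h2 : (Y + Z) ^ 2 = 0 := sq_zero_of_pow4 _ h40
  exact ⟨h1, h2, by rw [← hs, h2]⟩
end

section
/- If the matrix polynomial equation Xⁿ + A_{n-1}X^{n-1} + ... + A₀ = 0 over M₂(ℂ) has two distinct non-diagonalizable solutions with the same eigenvalue λ, then the equation has infinitely many solutions. -/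
open Matrix

private lemma sq_zero_of_tr_det {M : Matrix (Fin 2) (Fin 2) ℂ}
    (htr : M.trace = 0) (hdet : M.det = 0) : M ^ 2 = 0 := by
  rw [Matrix.trace_fin_two] at htr
  rw [Matrix.det_fin_two] at hdet
  ext i j
  fin_cases i <;> fin_cases j <;>
    simp [pow_two, Matrix.mul_apply, Fin.sum_univ_two] <;>
    first
      | linear_combination (M 0 0) * htr - hdet
      | linear_combination (M 0 1) * htr
      | linear_combination (M 1 0) * htr
      | linear_combination (M 1 1) * htr - hdet

private lemma tr_det_of_sq_zero {M : Matrix (Fin 2) (Fin 2) ℂ}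
    (h : M ^ 2 = 0) : M.trace = 0 ∧ M.det = 0 := by
  have hdet : M.det = 0 := by
    have : M.det ^ 2 = 0 := by rw [← Matrix.det_pow, h]; simp
    exact pow_eq_zero_iff (by norm_num) |>.mp this
  refine ⟨?_, hdet⟩
  have h00 := Matrix.ext_iff.mpr h 0 0
  have h11 := Matrix.ext_iff.mpr h 1 1
  simp [pow_two, Matrix.mul_apply, Fin.sum_univ_two] at h00 h11
  rw [Matrix.det_fin_two] at hdet
  rw [Matrix.trace_fin_two]
  have : (M 0 0 + M 1 1) ^ 2 = 0 := by linear_combination h00 + h11 + 2 * hdet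
  exact pow_eq_zero_iff (by norm_num) |>.mp this

private lemma pow_shift (lam : ℂ) (N : Matrix (Fin 2) (Fin 2) ℂ) (hN : N ^ 2 = 0) :
    ∀ k : ℕ, (lam • 1 + N) ^ k = lam ^ k • 1 + ((k : ℂ) * lam ^ (k - 1)) • N := by
  have hNN : N * N = 0 := by rw [← pow_two]; exact hN
  intro k
  induction k with
  | zero => simp
  | succ k ih =>
    rw [pow_succ, ih]
    have hc : lam ^ k + (k : ℂ) * lam ^ (k - 1) * lam = ((k : ℂ) + 1) * lam ^ k := by
      rcases Nat.eq_zero_or_pos k with hk | hk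
      · subst hk; simp
      · have : k - 1 + 1 = k := Nat.succ_pred_eq_of_pos hk
        rw [← this]; push_cast; ring
    rw [add_mul, mul_add, mul_add, smul_mul_assoc, smul_mul_assoc, smul_mul_assoc,
      smul_mul_assoc, hNN, smul_zero, one_mul, mul_smul_comm, mul_one, smul_smul]
    simp only [one_mul, smul_smul]
    rw [Nat.add_sub_cancel, add_zero, add_assoc, ← add_smul, hc, ← pow_succ]
    push_cast
    ring_nf

private lemma key_eq (n : ℕ) (A : Fin n → Matrix (Fin 2) (Fin 2) ℂ) (lam : ℂ)
    (N : Matrix (Fin 2) (Fin 2) ℂ) (hN : N ^ 2 = 0) :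
    (lam • 1 + N) ^ n + ∑ i : Fin n, A i * (lam • 1 + N) ^ (i : ℕ)
    = (lam ^ n • 1 + ∑ i : Fin n, lam ^ (i : ℕ) • A i)
      + (((n : ℂ) * lam ^ (n - 1)) • 1
          + ∑ i : Fin n, (((i : ℕ) : ℂ) * lam ^ ((i : ℕ) - 1)) • A i) * N := by
  simp only [pow_shift lam N hN]
  simp only [mul_add, add_mul, Finset.sum_mul, smul_mul_assoc, one_mul, mul_smul_comm, mul_one,
    Finset.sum_add_distrib]
  abel

/-- If the equation Xⁿ + Σ AᵢXⁱ = 0 over M₂(ℂ) has two distinct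
non-diagonalizable solutions with the same eigenvalue λ, then it has infinitely many
solutions. -/
theorem stmt6 (n : ℕ) (hn : 1 ≤ n) (A : Fin n → Matrix (Fin 2) (Fin 2) ℂ)
    (Y Z : Matrix (Fin 2) (Fin 2) ℂ) (lam : ℂ) (hne : Y ≠ Z)
    (hYnd : (Y - lam • (1 : Matrix (Fin 2) (Fin 2) ℂ)) ^ 2 = 0 ∧
      Y ≠ lam • (1 : Matrix (Fin 2) (Fin 2) ℂ))
    (hZnd : (Z - lam • (1 : Matrix (Fin 2) (Fin 2) ℂ)) ^ 2 = 0 ∧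
      Z ≠ lam • (1 : Matrix (Fin 2) (Fin 2) ℂ))
    (hY : Y ^ n + ∑ i : Fin n, A i * Y ^ (i : ℕ) = 0)
    (hZ : Z ^ n + ∑ i : Fin n, A i * Z ^ (i : ℕ) = 0) :
    {X : Matrix (Fin 2) (Fin 2) ℂ | X ^ n + ∑ i : Fin n, A i * X ^ (i : ℕ) = 0}.Infinite := by
  obtain ⟨hY2, -⟩ := hYnd
  obtain ⟨hZ2, -⟩ := hZnd
  set M1 := Y - lam • (1 : Matrix (Fin 2) (Fin 2) ℂ) with hM1
  set M2 := Z - lam • (1 : Matrix (Fin 2) (Fin 2) ℂ) with hM2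
  have hYeq : Y = lam • 1 + M1 := by rw [hM1]; abel
  have hZeq : Z = lam • 1 + M2 := by rw [hM2]; abel
  set C := lam ^ n • (1 : Matrix (Fin 2) (Fin 2) ℂ) + ∑ i : Fin n, lam ^ (i : ℕ) • A i with hC
  set B := ((n : ℂ) * lam ^ (n - 1)) • (1 : Matrix (Fin 2) (Fin 2) ℂ)
      + ∑ i : Fin n, (((i : ℕ) : ℂ) * lam ^ ((i : ℕ) - 1)) • A i with hB
  have mem_of : ∀ N : Matrix (Fin 2) (Fin 2) ℂ, N ^ 2 = 0 → C + B * N = 0 →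
      (lam • 1 + N) ∈
        {X : Matrix (Fin 2) (Fin 2) ℂ | X ^ n + ∑ i : Fin n, A i * X ^ (i : ℕ) = 0} := by
    intro N hN2 hCB
    simp only [Set.mem_setOf_eq]
    rw [key_eq n A lam N hN2, ← hC, ← hB]
    exact hCB
  have keyY : C + B * M1 = 0 := by
    rw [hC, hB, ← key_eq n A lam M1 hY2, ← hYeq]; exact hY
  have keyZ : C + B * M2 = 0 := by
    rw [hC, hB, ← key_eq n A lam M2 hZ2, ← hZeq]; exact hZ
  have hBD : B * (M2 - M1) = 0 := by
    have h1 : B * M2 = B * M1 := by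
      have : C + B * M1 = C + B * M2 := by rw [keyY, keyZ]
      exact (add_left_cancel this).symm
    rw [mul_sub, h1, sub_self]
  have hDne : M2 - M1 ≠ 0 := by
    intro h
    have h2 : M2 = M1 := sub_eq_zero.mp h
    rw [hM1, hM2] at h2
    exact hne (sub_left_inj.mp h2).symm
  by_cases hdet : (M2 - M1).det = 0
  · obtain ⟨htr1, hdet1⟩ := tr_det_of_sq_zero hY2
    obtain ⟨htr2, hdet2⟩ := tr_det_of_sq_zero hZ2
    apply Set.infinite_of_injective_forall_mem
      (f := fun t : ℂ => lam • 1 + (M1 + t • (M2 - M1)))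
    · intro s t hst
      simp only [add_right_inj] at hst
      have h3 : (s - t) • (M2 - M1) = 0 := by
        rw [sub_smul, hst, sub_self]
      rcases smul_eq_zero.mp h3 with h | h
      · exact sub_eq_zero.mp h
      · exact absurd h hDne
    · intro t
      apply mem_of
      · apply sq_zero_of_tr_det
        · simp [Matrix.trace_add, Matrix.trace_smul, Matrix.trace_sub, htr1, htr2]
        · rw [Matrix.det_fin_two] at hdet hdet1 hdet2 ⊢
          simp only [Matrix.add_apply, Matrix.smul_apply, Matrix.sub_apply, smul_eq_mul]
            at hdet ⊢
          linear_combination (1 - t) * hdet1 + t * hdet2 - (t - t ^ 2) * hdet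
      · rw [mul_add, mul_smul_comm, hBD, smul_zero, add_zero]
        exact keyY
  · have hU : IsUnit (M2 - M1).det := isUnit_iff_ne_zero.mpr hdet
    have hBzero : B = 0 := by
      calc B = B * ((M2 - M1) * (M2 - M1)⁻¹) := by
              rw [Matrix.mul_nonsing_inv _ hU, mul_one]
        _ = (B * (M2 - M1)) * (M2 - M1)⁻¹ := by rw [mul_assoc]
        _ = 0 := by rw [hBD, zero_mul]
    have hCzero : C = 0 := by
      rw [hBzero, zero_mul, add_zero] at keyY; exact keyY
    have hE2 : (!![0, 1; 0, 0] : Matrix (Fin 2) (Fin 2) ℂ) ^ 2 = 0 := by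
      ext i j
      fin_cases i <;> fin_cases j <;>
        simp [pow_two, Matrix.mul_apply, Fin.sum_univ_two]
    apply Set.infinite_of_injective_forall_mem
      (f := fun t : ℂ => lam • 1 + t • (!![0, 1; 0, 0] : Matrix (Fin 2) (Fin 2) ℂ))
    · intro s t hst
      simp only [add_right_inj] at hst
      have h3 : (s - t) • (!![0, 1; 0, 0] : Matrix (Fin 2) (Fin 2) ℂ) = 0 := by
        rw [sub_smul, hst, sub_self]
      rcases smul_eq_zero.mp h3 with h | h
      · exact sub_eq_zero.mp h
      · exfalso
        have := Matrix.ext_iff.mpr h 0 1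
        simp at this
    · intro t
      apply mem_of
      · rw [smul_pow, hE2, smul_zero]
      · rw [hBzero, hCzero, zero_mul, add_zero]
end

section
/- Suppose λ and μ are distinct roots of det(M(t)) = 0, the nullspace of M(λ) has dimension ≥ 2, and v is any nonzero vector in the nullspace of M(μ). Then for every one-dimensional subspace L of the nullspace of M(λ) not equal to span(v), the matrix X with eigenvalue λ on L and eigenvalue μ on span(v) is a solution; hence the equation has infinitely many solutions. -/
lemma aux_eq_zero_of_mulVecLin (N : Matrix (Fin 2) (Fin 2) ℂ)
    (h : N.mulVecLin = 0) : N = 0 := by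
  ext i j
  have := congrFun (congrArg (fun f => f (Pi.single j 1)) (congrArg DFunLike.coe h)) i
  simpa [Matrix.mulVecLin_apply, Matrix.mulVec_single] using this

lemma aux_sum_mulVec {ι : Type*} (s : Finset ι) (N : ι → Matrix (Fin 2) (Fin 2) ℂ)
    (x : Fin 2 → ℂ) :
    (∑ i ∈ s, N i).mulVec x = ∑ i ∈ s, (N i).mulVec x := by
  induction s using Finset.cons_induction with
  | empty => simp [Matrix.zero_mulVec]
  | cons a s ha ih => simp [Finset.sum_cons, Matrix.add_mulVec, ih]

lemma aux_smul_cancel {v : Fin 2 → ℂ} (hv : v ≠ 0) {a b : ℂ}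
    (h : a • v = b • v) : a = b := by
  have : (a - b) • v = 0 := by rw [sub_smul, h, sub_self]
  rcases smul_eq_zero.mp this with h' | h'
  · exact sub_eq_zero.mp h'
  · exact absurd h' hv

/-- If λ ≠ μ are roots of det M(t), the nullspace of M(λ) is 2-dimensional,
and v ≠ 0 lies in the nullspace of M(μ), then any u with ![u,v] linearly independent gives
a solution X with Xu = λu, Xv = μv; hence the equation has infinitely many solutions. -/
theorem stmt7 (n : ℕ) (hn : 1 ≤ n) (A : Fin n → Matrix (Fin 2) (Fin 2) ℂ)
    (lam mu : ℂ) (hlm : lam ≠ mu)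
    (M : ℂ → Matrix (Fin 2) (Fin 2) ℂ)
    (hM : ∀ t, M t = t ^ n • (1 : Matrix (Fin 2) (Fin 2) ℂ) + ∑ i : Fin n, t ^ (i : ℕ) • A i)
    (hlam : (M lam).det = 0) (hmu : (M mu).det = 0)
    (hker : 2 ≤ Module.finrank ℂ (LinearMap.ker (M lam).mulVecLin))
    (v : Fin 2 → ℂ) (hv : v ≠ 0) (hvker : (M mu).mulVec v = 0) :
    (∀ u : Fin 2 → ℂ, LinearIndependent ℂ ![u, v] →
      ∃ X : Matrix (Fin 2) (Fin 2) ℂ,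
        X ^ n + ∑ i : Fin n, A i * X ^ (i : ℕ) = 0 ∧
        X.mulVec u = lam • u ∧ X.mulVec v = mu • v) ∧
    {X : Matrix (Fin 2) (Fin 2) ℂ | X ^ n + ∑ i : Fin n, A i * X ^ (i : ℕ) = 0}.Infinite := by
  -- M lam = 0
  have hfr : Module.finrank ℂ (Fin 2 → ℂ) = 2 := by simp
  have hMl : M lam = 0 := by
    apply aux_eq_zero_of_mulVecLin
    rw [← LinearMap.ker_eq_top]
    apply Submodule.eq_top_of_finrank_eq
    have hle := Submodule.finrank_le (LinearMap.ker (M lam).mulVecLin)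
    omega
  have hulker : ∀ u : Fin 2 → ℂ, (M lam).mulVec u = 0 := by
    intro u; rw [hMl]; simp
  -- The main construction
  have main : ∀ u : Fin 2 → ℂ, LinearIndependent ℂ ![u, v] →
      ∃ X : Matrix (Fin 2) (Fin 2) ℂ,
        X ^ n + ∑ i : Fin n, A i * X ^ (i : ℕ) = 0 ∧
        X.mulVec u = lam • u ∧ X.mulVec v = mu • v := by
    intro u hu
    have hcard : Fintype.card (Fin 2) = Module.finrank ℂ (Fin 2 → ℂ) := by simp
    let b := basisOfLinearIndependentOfCardEqFinrank hu hcard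
    have hb : ⇑b = ![u, v] := coe_basisOfLinearIndependentOfCardEqFinrank hu hcard
    have hb0 : b 0 = u := by rw [hb]; rfl
    have hb1 : b 1 = v := by rw [hb]; rfl
    let f := (b.constr ℂ ![lam • u, mu • v])
    let X := LinearMap.toMatrix' f
    have hXlin : X.mulVecLin = f := by
      rw [← Matrix.toLin'_apply']; exact Matrix.toLin'_toMatrix' f
    have hXu : X.mulVec u = lam • u := by
      have : X.mulVecLin u = f u := by rw [hXlin]
      rw [Matrix.mulVecLin_apply] at this
      rw [this, ← hb0, Module.Basis.constr_basis]; simp [hb0]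
    have hXv : X.mulVec v = mu • v := by
      have : X.mulVecLin v = f v := by rw [hXlin]
      rw [Matrix.mulVecLin_apply] at this
      rw [this, ← hb1, Module.Basis.constr_basis]; simp [hb1]
    have hpowu : ∀ k : ℕ, (X ^ k).mulVec u = lam ^ k • u := by
      intro k; induction k with
      | zero => simp
      | succ k ih =>
          rw [pow_succ, ← Matrix.mulVec_mulVec, hXu, Matrix.mulVec_smul, ih,
            pow_succ, mul_comm, mul_smul]
    have hpowv : ∀ k : ℕ, (X ^ k).mulVec v = mu ^ k • v := by
      intro k; induction k with
      | zero => simp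
      | succ k ih =>
          rw [pow_succ, ← Matrix.mulVec_mulVec, hXv, Matrix.mulVec_smul, ih,
            pow_succ, mul_comm, mul_smul]
    refine ⟨X, ?_, hXu, hXv⟩
    set N := X ^ n + ∑ i : Fin n, A i * X ^ (i : ℕ) with hN
    have hNu : N.mulVec u = 0 := by
      have := hulker u
      rw [hM lam] at this
      rw [hN, Matrix.add_mulVec, aux_sum_mulVec]
      rw [Matrix.add_mulVec, aux_sum_mulVec] at this
      simp only [← Matrix.mulVec_mulVec, hpowu, Matrix.mulVec_smul] at *
      simpa [Matrix.smul_mulVec] using this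
    have hNv : N.mulVec v = 0 := by
      have := hvker
      rw [hM mu] at this
      rw [hN, Matrix.add_mulVec, aux_sum_mulVec]
      rw [Matrix.add_mulVec, aux_sum_mulVec] at this
      simp only [← Matrix.mulVec_mulVec, hpowv, Matrix.mulVec_smul] at *
      simpa [Matrix.smul_mulVec] using this
    apply aux_eq_zero_of_mulVecLin
    apply b.ext
    intro i
    fin_cases i
    · simpa [Matrix.mulVecLin_apply, hb0] using hNu
    · simpa [Matrix.mulVecLin_apply, hb1] using hNv
  refine ⟨main, ?_⟩
  -- pick w with ![w, v] linearly independent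
  obtain ⟨w, hw⟩ : ∃ w : Fin 2 → ℂ, w ∉ Submodule.span ℂ {v} := by
    by_contra h
    push_neg at h
    have htop : Submodule.span ℂ {v} = ⊤ := by
      rw [eq_top_iff]; intro x _; exact h x
    have h1 : Module.finrank ℂ (Submodule.span ℂ {v}) = 1 :=
      finrank_span_singleton hv
    rw [htop, finrank_top, hfr] at h1
    omega
  have hindep : ∀ c : ℂ, LinearIndependent ℂ ![w + c • v, v] := by
    intro c
    rw [linearIndependent_fin2]
    refine ⟨hv, fun a ha => ?_⟩
    simp only [Matrix.cons_val_one, Matrix.head_cons, Matrix.cons_val_zero] at ha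
    apply hw
    have : w = (a - c) • v := by
      rw [sub_smul]; exact eq_sub_of_add_eq ha.symm
    rw [this]
    exact Submodule.smul_mem _ _ (Submodule.mem_span_singleton_self v)
  choose F hF1 hF2 hF3 using fun c : ℂ => main (w + c • v) (hindep c)
  refine Set.infinite_of_injective_forall_mem (f := F) ?_ ?_
  · intro c c' hcc
    have hw1 : ∀ d : ℂ, (F d).mulVec w = lam • w + (d * (lam - mu)) • v := by
      intro d
      have h4 : (F d).mulVec (w + d • v) = (F d).mulVec w + d • (F d).mulVec v := by
        rw [Matrix.mulVec_add, Matrix.mulVec_smul]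
      rw [hF2 d, hF3 d] at h4
      have h5 : (F d).mulVec w = lam • (w + d • v) - d • (mu • v) := by
        rw [h4]; abel
      rw [h5]
      module
    have h6 := hw1 c
    rw [hcc, hw1 c'] at h6
    have h7 : (c' * (lam - mu)) • v = (c * (lam - mu)) • v := add_left_cancel h6
    have h8 : c' * (lam - mu) = c * (lam - mu) := aux_smul_cancel hv h7
    exact (mul_right_cancel₀ (sub_ne_zero.mpr hlm) h8).symm
  · intro c
    exact hF1 c
end

section
/- If λ, μ ∈ ℂ are distinct, u ∈ null(M(λ)) and v ∈ null(M(μ)) are linearly independent vectors in ℂ², then the unique matrix X ∈ M₂(ℂ) with Xu = λu and Xv = μv satisfies Xⁿ + A_{n-1}X^{n-1} + ... + A₀ = 0. -/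
/-!
Since `u` and `v` form a basis of `ℂ²`, a matrix is determined by its action on them. For the
right evaluation `Xⁿ + Σ Aᵢ Xⁱ`, an eigenvector `x` of `X` with eigenvalue `c` gives
`(Xⁿ + Σ Aᵢ Xⁱ) x = M(c) x`, so the polynomial kills `u` and `v` and hence vanishes.
-/

open Matrix

namespace Matrix

section Eigen

variable {ι R : Type*} [Fintype ι] [DecidableEq ι] [CommRing R]
  {X : Matrix ι ι R} {x : ι → R} {c : R}

theorem pow_mulVec_of_mulVec_eq_smul (hx : X *ᵥ x = c • x) (k : ℕ) :
    X ^ k *ᵥ x = c ^ k • x := by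
  induction k with
  | zero => simp
  | succ k ih => rw [pow_succ, ← mulVec_mulVec, hx, mulVec_smul, ih, smul_smul, pow_succ']

theorem mulVec_pow_add_sum_mul_pow_of_mulVec_eq_smul (hx : X *ᵥ x = c • x) {n : ℕ}
    (A : Fin n → Matrix ι ι R) :
    (X ^ n + ∑ i : Fin n, A i * X ^ (i : ℕ)) *ᵥ x
      = (c ^ n • 1 + ∑ i : Fin n, c ^ (i : ℕ) • A i) *ᵥ x := by
  simp only [add_mulVec, sum_mulVec, ← mulVec_mulVec, pow_mulVec_of_mulVec_eq_smul hx,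
    mulVec_smul, smul_mulVec, one_mulVec]

end Eigen

section Basis

variable {ι m K : Type*} [Fintype ι] [DecidableEq ι] [Field K]
  {v : ι → ι → K} (hv : LinearIndependent K v)
include hv

theorem ext_of_mulVec_linearIndependent {M N : Matrix m ι K}
    (h : ∀ i, M *ᵥ v i = N *ᵥ v i) : M = N :=
  let b := basisOfLinearIndependentOfCardEqFinrank' v hv
    (Module.finrank_fintype_fun_eq_card K).symm
  toLin'.injective <| b.ext fun i => by simpa [b] using h i

theorem existsUnique_mulVec_eq_of_linearIndependent (w : ι → ι → K) :
    ∃! X : Matrix ι ι K, ∀ i, X *ᵥ v i = w i := by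
  let b := basisOfLinearIndependentOfCardEqFinrank' v hv
    (Module.finrank_fintype_fun_eq_card K).symm
  have hX : ∀ i, LinearMap.toMatrix' (b.constr K w) *ᵥ v i = w i := fun i => by
    simpa [b] using b.constr_basis K w i
  exact ⟨_, hX, fun Y hY =>
    ext_of_mulVec_linearIndependent hv fun i => (hY i).trans (hX i).symm⟩

end Basis

end Matrix

theorem stmt8_general (n : ℕ) (A : Fin n → Matrix (Fin 2) (Fin 2) ℂ)
    (lam mu : ℂ) (u v : Fin 2 → ℂ)
    (hli : LinearIndependent ℂ ![u, v])
    (hu : (lam ^ n • (1 : Matrix (Fin 2) (Fin 2) ℂ) + ∑ i : Fin n, lam ^ (i : ℕ) • A i).mulVec u = 0)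
    (hv : (mu ^ n • (1 : Matrix (Fin 2) (Fin 2) ℂ) + ∑ i : Fin n, mu ^ (i : ℕ) • A i).mulVec v = 0) :
    (∃! X : Matrix (Fin 2) (Fin 2) ℂ, X.mulVec u = lam • u ∧ X.mulVec v = mu • v) ∧
    (∀ X : Matrix (Fin 2) (Fin 2) ℂ, X.mulVec u = lam • u → X.mulVec v = mu • v →
      X ^ n + ∑ i : Fin n, A i * X ^ (i : ℕ) = 0) := by
  refine ⟨?_, fun X hXu hXv => ?_⟩
  · simpa [Fin.forall_fin_two] using
      existsUnique_mulVec_eq_of_linearIndependent hli ![lam • u, mu • v]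
  · refine ext_of_mulVec_linearIndependent hli (Fin.forall_fin_two.2 ⟨?_, ?_⟩)
    · simpa [mulVec_pow_add_sum_mul_pow_of_mulVec_eq_smul hXu] using hu
    · simpa [mulVec_pow_add_sum_mul_pow_of_mulVec_eq_smul hXv] using hv

/-- If λ ≠ μ, u ∈ null M(λ) and v ∈ null M(μ) are linearly independent, then
the unique X with Xu = λu and Xv = μv satisfies Xⁿ + Σ AᵢXⁱ = 0. -/
theorem stmt8 (n : ℕ) (hn : 1 ≤ n) (A : Fin n → Matrix (Fin 2) (Fin 2) ℂ)
    (lam mu : ℂ) (hlm : lam ≠ mu) (u v : Fin 2 → ℂ)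
    (hli : LinearIndependent ℂ ![u, v])
    (hu : (lam ^ n • (1 : Matrix (Fin 2) (Fin 2) ℂ) + ∑ i : Fin n, lam ^ (i : ℕ) • A i).mulVec u = 0)
    (hv : (mu ^ n • (1 : Matrix (Fin 2) (Fin 2) ℂ) + ∑ i : Fin n, mu ^ (i : ℕ) • A i).mulVec v = 0) :
    (∃! X : Matrix (Fin 2) (Fin 2) ℂ, X.mulVec u = lam • u ∧ X.mulVec v = mu • v) ∧
    (∀ X : Matrix (Fin 2) (Fin 2) ℂ, X.mulVec u = lam • u → X.mulVec v = mu • v →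
      X ^ n + ∑ i : Fin n, A i * X ^ (i : ℕ) = 0) :=
  stmt8_general n A lam mu u v hli hu hv
end

section
/- If the equation Xⁿ + A_{n-1}X^{n-1} + ... + A₀ = 0 over M₂(ℂ) has only finitely many solutions, then the number of solutions is at most C(2n,2) = n(2n−1). -/
/-!
View `P(λ) = λⁿ + ∑ Aᵢ λⁱ` as a polynomial with coefficients in `M₂(ℂ)` and let
`f = det P(λ)`, a monic polynomial of degree `2n`. A solution `X` is a right root of `P`, so
`P(λ) = Q(λ) (λ - X)` and `charpoly X ∣ f`: the eigenvalue multiset of `X` is one of the at most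
`C(2n, 2)` two-element sub-multisets of the roots of `f`.

It remains to see that a solution is determined by its characteristic polynomial `c` when there
are finitely many solutions. By Cayley–Hamilton, `P(Z) = M Z + N` with `M`, `N` depending only on
`c`, for every `Z` with `charpoly Z = c`. Two distinct solutions `X`, `Y` with the same `c` then
produce infinitely many: the whole line `X + s (Y - X)` if `M ≠ 0`, and every matrix with
characteristic polynomial `c` if `M = 0`.
-/

open Polynomial

namespace Polynomial

variable {R : Type*} [Ring R]

theorem exists_sub_C_eval_eq_mul_X_sub_C (p : R[X]) (r : R) :
    ∃ q : R[X], p - C (p.eval r) = q * (X - C r) := by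
  induction p using Polynomial.induction_on' with
  | add p q hp hq =>
    obtain ⟨a, ha⟩ := hp
    obtain ⟨b, hb⟩ := hq
    exact ⟨a + b, by rw [eval_add, C_add, add_mul, ← ha, ← hb]; abel⟩
  | monomial k a =>
    refine ⟨C a * ∑ i ∈ Finset.range k, X ^ i * C r ^ (k - 1 - i), ?_⟩
    rw [mul_assoc, (commute_X (C r)).geom_sum₂_mul, eval_monomial, ← C_mul_X_pow_eq_monomial,
      mul_sub, C_mul, C_pow]

theorem exists_eq_mul_X_sub_C_of_eval_eq_zero {p : R[X]} {r : R} (h : p.eval r = 0) :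
    ∃ q : R[X], p = q * (X - C r) := by
  simpa [h] using p.exists_sub_C_eval_eq_mul_X_sub_C r

end Polynomial

namespace Matrix

section MatrixPolynomial

variable {m R : Type*} [Fintype m] [DecidableEq m] [CommRing R]

theorem charpoly_dvd_det_of_eval_eq_zero {P : (Matrix m m R)[X]} {M : Matrix m m R}
    (h : P.eval M = 0) : M.charpoly ∣ (matPolyEquiv.symm P).det := by
  obtain ⟨Q, rfl⟩ := exists_eq_mul_X_sub_C_of_eval_eq_zero h
  refine Dvd.intro_left (matPolyEquiv.symm Q).det ?_
  rw [map_mul, ← matPolyEquiv_charmatrix, AlgEquiv.symm_apply_apply, det_mul, charpoly]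

theorem natDegree_det_le_of_natDegree_le {M : Matrix m m R[X]} {N : ℕ}
    (h : ∀ i j, (M i j).natDegree ≤ N) : M.det.natDegree ≤ Fintype.card m * N := by
  rw [det_apply']
  refine natDegree_sum_le_of_forall_le _ _ fun σ _ => (natDegree_mul_le).trans ?_
  rw [natDegree_intCast, zero_add]
  refine (natDegree_prod_le _ _).trans ?_
  simpa using Finset.sum_le_card_nsmul Finset.univ _ N fun i _ => h (σ i) i

theorem coeff_det_of_natDegree_le {M : Matrix m m R[X]} {N : ℕ}
    (h : ∀ i j, (M i j).natDegree ≤ N) :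
    M.det.coeff (Fintype.card m * N) = (M.map (coeff · N)).det := by
  rw [det_apply', det_apply', finsetSum_coeff]
  refine Finset.sum_congr rfl fun σ _ => ?_
  rw [coeff_intCast_mul, ← Finset.card_univ,
    coeff_prod_of_natDegree_le (h := fun i _ => h (σ i) i)]
  rfl

theorem det_matPolyEquiv_symm_monic [Nontrivial R] {P : (Matrix m m R)[X]} (hP : P.Monic) :
    (matPolyEquiv.symm P).det.Monic ∧
      (matPolyEquiv.symm P).det.natDegree ≤ Fintype.card m * P.natDegree := by
  have hdeg : ∀ i j, (matPolyEquiv.symm P i j).natDegree ≤ P.natDegree := fun i j =>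
    natDegree_le_iff_coeff_eq_zero.2 fun k hk => by
      rw [← matPolyEquiv_coeff_apply, AlgEquiv.apply_symm_apply,
        coeff_eq_zero_of_natDegree_lt hk, zero_apply]
  have hlead : (matPolyEquiv.symm P).map (coeff · P.natDegree) = 1 := by
    ext i j
    rw [map_apply, ← matPolyEquiv_coeff_apply, AlgEquiv.apply_symm_apply]
    exact congrFun (congrFun hP i) j
  refine ⟨monic_of_natDegree_le_of_coeff_eq_one _ (natDegree_det_le_of_natDegree_le hdeg) ?_,
    natDegree_det_le_of_natDegree_le hdeg⟩
  rw [coeff_det_of_natDegree_le hdeg, hlead, det_one]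

end MatrixPolynomial

theorem card_le_choose_of_injOn_charpoly {K m : Type*} [Field K] [IsAlgClosed K]
    [Fintype m] [DecidableEq m] {S : Set (Matrix m m K)} {f : K[X]} (hf : f ≠ 0)
    (hdvd : ∀ A ∈ S, A.charpoly ∣ f) (hinj : S.InjOn charpoly) :
    Nat.card S ≤ f.natDegree.choose (Fintype.card m) := by
  classical
  set T := (f.roots.powersetCard (Fintype.card m)).toFinset
  have hroots : S.InjOn fun A => A.charpoly.roots := fun A hA B hB h => hinj hA hB <| by
    rw [(IsAlgClosed.splits _).eq_prod_roots_of_monic A.charpoly_monic,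
      (IsAlgClosed.splits _).eq_prod_roots_of_monic B.charpoly_monic]
    exact congrArg (fun r => (r.map fun a => X - C a).prod) h
  have hmaps : ∀ A ∈ S, A.charpoly.roots ∈ (T : Set (Multiset K)) := by
    intro A hA
    rw [Finset.mem_coe, Multiset.mem_toFinset, Multiset.mem_powersetCard,
      IsAlgClosed.card_roots_eq_natDegree, charpoly_natDegree_eq_dim]
    exact ⟨roots.le_of_dvd hf (hdvd A hA), rfl⟩
  calc Nat.card S = S.ncard := Nat.card_coe_set_eq S
    _ ≤ T.card := by
        rw [← Set.ncard_coe_finset]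
        exact Set.ncard_le_ncard_of_injOn _ hmaps hroots (Finset.finite_toSet _)
    _ ≤ (f.roots.powersetCard (Fintype.card m)).card := Multiset.toFinset_card_le _
    _ ≤ f.natDegree.choose (Fintype.card m) := by
        rw [Multiset.card_powersetCard]
        exact Nat.choose_le_choose _ (card_roots' f)

section FinTwo

variable {R : Type*} [CommRing R]

theorem det_add_smul_of_fin_two (A D : Matrix (Fin 2) (Fin 2) R) (s : R) :
    (A + s • D).det = A.det + s * ((A + D).det - A.det - D.det) + s ^ 2 * D.det := by
  simp only [det_fin_two, add_apply, smul_apply, smul_eq_mul]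
  ring

variable [Nontrivial R]

theorem charpoly_eq_charpoly_iff_fin_two {A B : Matrix (Fin 2) (Fin 2) R} :
    A.charpoly = B.charpoly ↔ A.trace = B.trace ∧ A.det = B.det := by
  refine ⟨fun h => ⟨?_, ?_⟩, fun ⟨htr, hdet⟩ => by
    rw [charpoly_fin_two, charpoly_fin_two, htr, hdet]⟩
  · rw [trace_eq_neg_charpoly_coeff, trace_eq_neg_charpoly_coeff, h]
  · rw [det_eq_sign_charpoly_coeff, det_eq_sign_charpoly_coeff, h]

theorem pow_eq_smul_add_smul_of_fin_two (Z : Matrix (Fin 2) (Fin 2) R) (k : ℕ) :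
    Z ^ k = (X ^ k %ₘ Z.charpoly).coeff 1 • Z + (X ^ k %ₘ Z.charpoly).coeff 0 • 1 := by
  have hdeg : (X ^ k %ₘ Z.charpoly).natDegree ≤ 1 := by
    have := natDegree_modByMonic_lt (X ^ k) Z.charpoly_monic fun h => by
      simpa [h] using Z.charpoly_natDegree_eq_dim
    rw [charpoly_natDegree_eq_dim, Fintype.card_fin] at this
    omega
  calc Z ^ k = aeval Z (X ^ k %ₘ Z.charpoly) := by
        rw [aeval_modByMonic_eq_self_of_root (aeval_self_charpoly Z), map_pow, aeval_X]
    _ = _ := by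
        conv_lhs => rw [eq_X_add_C_of_natDegree_le_one hdeg]
        simp [Algebra.algebraMap_eq_smul_one]

theorem exists_eval_eq_mul_add_of_charpoly_eq (P : (Matrix (Fin 2) (Fin 2) R)[X]) (c : R[X]) :
    ∃ M N : Matrix (Fin 2) (Fin 2) R, ∀ Z : Matrix (Fin 2) (Fin 2) R, Z.charpoly = c →
      P.eval Z = M * Z + N := by
  refine ⟨∑ k ∈ Finset.range (P.natDegree + 1), (X ^ k %ₘ c).coeff 1 • P.coeff k,
    ∑ k ∈ Finset.range (P.natDegree + 1), (X ^ k %ₘ c).coeff 0 • P.coeff k, fun Z hZ => ?_⟩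
  rw [eval_eq_sum_range, Finset.sum_mul, ← Finset.sum_add_distrib]
  refine Finset.sum_congr rfl fun k _ => ?_
  rw [pow_eq_smul_add_smul_of_fin_two, hZ, mul_add, mul_smul_comm, mul_smul_comm, mul_one,
    smul_mul_assoc]

theorem charpoly_add_smul_of_fin_two {A D : Matrix (Fin 2) (Fin 2) R} (htr : D.trace = 0)
    (hdet : D.det = 0) (hadd : (A + D).det = A.det) (s : R) :
    (A + s • D).charpoly = A.charpoly :=
  charpoly_eq_charpoly_iff_fin_two.2
    ⟨by rw [trace_add, trace_smul, htr, smul_zero, add_zero],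
     by rw [det_add_smul_of_fin_two, hadd, hdet]; ring⟩

theorem infinite_setOf_charpoly_eq_of_fin_two [Infinite R] (A : Matrix (Fin 2) (Fin 2) R) :
    {Z : Matrix (Fin 2) (Fin 2) R | Z.charpoly = A.charpoly}.Infinite := by
  set t := A.trace
  set d := A.det
  refine Set.infinite_of_injective_forall_mem
    (f := fun s : R => !![s, 1; s * (t - s) - d, t - s]) (fun a b h => ?_) fun s => ?_
  · simpa using congrFun (congrFun h 0) 0
  · refine charpoly_eq_charpoly_iff_fin_two.2 ⟨?_, ?_⟩
    · simp [trace_fin_two, t]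
    · simp [det_fin_two, d]

theorem injOn_charpoly_of_finite_of_fin_two {K : Type*} [Field K] [Infinite K]
    {P : (Matrix (Fin 2) (Fin 2) K)[X]} (hfin : {Z | P.eval Z = 0}.Finite) :
    Set.InjOn charpoly {Z | P.eval Z = 0} := by
  intro A hA B hB hAB
  by_contra hne
  obtain ⟨M, N, hMN⟩ := exists_eval_eq_mul_add_of_charpoly_eq P A.charpoly
  have hA' : M * A + N = 0 := (hMN A rfl).symm.trans hA
  have hB' : M * B + N = 0 := (hMN B hAB.symm).symm.trans hB
  refine Set.not_infinite.2 hfin ?_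
  by_cases hM : M = 0
  · refine (infinite_setOf_charpoly_eq_of_fin_two A).mono fun Z hZ => ?_
    rw [hM, zero_mul, zero_add] at hA'
    rw [Set.mem_ofPred_eq, hMN Z hZ, hM, hA', zero_mul, zero_add]
  set D := B - A
  have hMD : M * D = 0 := by rw [mul_sub, sub_eq_zero, add_right_cancel (hA'.trans hB'.symm)]
  have hD : D ≠ 0 := sub_ne_zero.2 (Ne.symm hne)
  have hdetD : D.det = 0 := by
    by_contra h
    rw [← mul_nonsing_inv_cancel_right (A := D) M (isUnit_iff_ne_zero.2 h), hMD, zero_mul] at hM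
    exact hM rfl
  obtain ⟨htr, hdet⟩ := charpoly_eq_charpoly_iff_fin_two.1 hAB
  have htrD : D.trace = 0 := by rw [trace_sub, htr, sub_self]
  have hdetAD : (A + D).det = A.det := by rw [add_sub_cancel, hdet]
  refine Set.infinite_of_injective_forall_mem (f := fun s : K => A + s • D)
    ((add_right_injective A).comp (smul_left_injective K hD)) fun s => ?_
  rw [Set.mem_ofPred_eq, hMN _ (charpoly_add_smul_of_fin_two htrD hdetD hdetAD s), mul_add,
    mul_smul_comm, hMD, smul_zero, add_zero, hA']

end FinTwo

end Matrix

theorem stmt9_general (n : ℕ) (A : Fin n → Matrix (Fin 2) (Fin 2) ℂ)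
    (hfin : {X : Matrix (Fin 2) (Fin 2) ℂ |
      X ^ n + ∑ i : Fin n, A i * X ^ (i : ℕ) = 0}.Finite) :
    Nat.card {X : Matrix (Fin 2) (Fin 2) ℂ |
      X ^ n + ∑ i : Fin n, A i * X ^ (i : ℕ) = 0} ≤ Nat.choose (2 * n) 2 := by
  let P : (Matrix (Fin 2) (Fin 2) ℂ)[X] := X ^ n + ∑ i : Fin n, C (A i) * X ^ (i : ℕ)
  have hdeg : (∑ i : Fin n, C (A i) * X ^ (i : ℕ)).degree < (n : WithBot ℕ) :=
    degree_sum_fin_lt A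
  have hP : P.Monic := monic_X_pow_add hdeg
  have hPdeg : P.natDegree = n := by
    rw [natDegree_add_eq_left_of_degree_lt (by rwa [degree_X_pow]), natDegree_X_pow]
  have hsol : {X : Matrix (Fin 2) (Fin 2) ℂ | X ^ n + ∑ i : Fin n, A i * X ^ (i : ℕ) = 0} =
      {Z | P.eval Z = 0} := by
    simp [P, eval_finsetSum, eval_X_pow]
  rw [hsol] at hfin ⊢
  obtain ⟨hmonic, hdet⟩ := Matrix.det_matPolyEquiv_symm_monic hP
  calc _ ≤ _ := Matrix.card_le_choose_of_injOn_charpoly hmonic.ne_zero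
        (fun _ => Matrix.charpoly_dvd_det_of_eval_eq_zero)
        (Matrix.injOn_charpoly_of_finite_of_fin_two hfin)
    _ ≤ Nat.choose (2 * n) 2 := by
        rw [Fintype.card_fin]
        exact Nat.choose_le_choose _ (by simpa [hPdeg] using hdet)

/-- If the equation Xⁿ + Σ AᵢXⁱ = 0 over M₂(ℂ) has only finitely many
solutions, then it has at most C(2n, 2) solutions. -/
theorem stmt9 (n : ℕ) (hn : 1 ≤ n) (A : Fin n → Matrix (Fin 2) (Fin 2) ℂ)
    (hfin : {X : Matrix (Fin 2) (Fin 2) ℂ |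
      X ^ n + ∑ i : Fin n, A i * X ^ (i : ℕ) = 0}.Finite) :
    Nat.card {X : Matrix (Fin 2) (Fin 2) ℂ |
      X ^ n + ∑ i : Fin n, A i * X ^ (i : ℕ) = 0} ≤ Nat.choose (2 * n) 2 :=
  stmt9_general n A hfin
end

section
/- Suppose p̄ ≤ n and the matrices A₀,...,A_{n-1} ∈ M₂(ℂ) satisfy a₁₁⁽ⁱ⁾ = a₂₁⁽ⁱ⁾ = 0 for 0 ≤ i ≤ p̄−1 (entries of Aᵢ). Then t^{p̄} divides det(M(t)), and the vector e₁ = (1,0)ᵀ lies in the nullspace of M(0). -/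
open Polynomial Matrix

/- The first column of `M(t)` is divisible by `t ^ pbar`, and the determinant is linear in that
column. At `t = 0` only the constant coefficient `A₀` survives, and its first column is zero. -/

theorem Matrix.dvd_det_of_forall_dvd_col {m R : Type*} [Fintype m] [DecidableEq m] [CommRing R]
    (M : Matrix m m R) (j : m) (d : R) (h : ∀ i, d ∣ M i j) : d ∣ M.det := by
  choose v hv using h
  have hM : M = M.updateCol j (d • v) := by
    ext i k
    rcases eq_or_ne k j with rfl | hk
    · simp [hv]
    · simp [hk]
  rw [hM, det_updateCol_smul]
  exact dvd_mul_right _ _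

theorem Polynomial.X_pow_dvd_sum_X_pow_smul_map_C_apply {ι m R : Type*} [Fintype ι] [CommRing R]
    (e : ι → ℕ) (A : ι → Matrix m m R) (p : ℕ) (j k : m)
    (h : ∀ i, e i < p → A i j k = 0) :
    (X : R[X]) ^ p ∣ (∑ i, (X : R[X]) ^ e i • (A i).map C) j k := by
  rw [Matrix.sum_apply]
  refine Finset.dvd_sum fun i _ => ?_
  rw [Matrix.smul_apply, Matrix.map_apply, smul_eq_mul]
  rcases lt_or_ge (e i) p with hi | hi
  · simp [h i hi]
  · exact (pow_dvd_pow X hi).mul_right _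

theorem Fin.sum_zero_pow_smul {n : ℕ} {R M : Type*} [Semiring R] [AddCommMonoid M] [Module R M]
    (v : Fin (n + 1) → M) : ∑ i : Fin (n + 1), (0 : R) ^ (i : ℕ) • v i = v 0 := by
  simp [Fin.sum_univ_succ]

/-- If p̄ ≤ n and the first-column entries of A₀,…,A_{p̄−1} vanish, then
t^p̄ divides det M(t) and e₁ = (1,0)ᵀ lies in the nullspace of M(0). -/
theorem stmt10 (n pbar : ℕ) (hp : 1 ≤ pbar) (hpn : pbar ≤ n)
    (A : Fin n → Matrix (Fin 2) (Fin 2) ℂ)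
    (hzero : ∀ i : Fin n, (i : ℕ) ≤ pbar - 1 → A i 0 0 = 0 ∧ A i 1 0 = 0) :
    ((Polynomial.X : Polynomial ℂ) ^ pbar ∣
      ((Polynomial.X : Polynomial ℂ) ^ n • (1 : Matrix (Fin 2) (Fin 2) (Polynomial ℂ)) +
        ∑ i : Fin n, (Polynomial.X : Polynomial ℂ) ^ (i : ℕ) • (A i).map Polynomial.C).det) ∧
    ((0 : ℂ) ^ n • (1 : Matrix (Fin 2) (Fin 2) ℂ) +
      ∑ i : Fin n, (0 : ℂ) ^ (i : ℕ) • A i).mulVec ![1, 0] = 0 := by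
  have hcol : ∀ i : Fin n, (i : ℕ) < pbar → ∀ j, A i j 0 = 0 := fun i hi j => by
    obtain ⟨h0, h1⟩ := hzero i (by omega)
    fin_cases j <;> assumption
  refine ⟨dvd_det_of_forall_dvd_col _ 0 _ fun j => ?_, ?_⟩
  · rw [Matrix.add_apply, Matrix.smul_apply, smul_eq_mul]
    exact dvd_add ((pow_dvd_pow X hpn).mul_right _)
      (X_pow_dvd_sum_X_pow_smul_map_C_apply _ A pbar j 0 fun i hi => hcol i hi j)
  · obtain ⟨m, rfl⟩ : ∃ m, n = m + 1 := ⟨n - 1, by omega⟩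
    rw [Fin.sum_zero_pow_smul, zero_pow m.succ_ne_zero, zero_smul, zero_add]
    ext j
    fin_cases j <;> simp [mulVec, dotProduct, hcol 0 hp]
end

section
/- Suppose n < p̄ ≤ 2n and A₀,...,A_{n-1} ∈ M₂(ℂ) satisfy a₁₁⁽ⁱ⁾ = a₂₁⁽ⁱ⁾ = 0 for all 0 ≤ i ≤ n−1 and a₂₂⁽ⁱ⁾ = 0 for 0 ≤ i ≤ p̄−n−1. Then det(M(t)) = t^{2n} + a₂₂⁽ⁿ⁻¹⁾t^{2n-1} + ... + a₂₂⁽ᵖ̄⁻ⁿ⁾t^{p̄}, so 0 is a root of det(M(t)) of multiplicity at least p̄. -/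
/-- If n < p̄ ≤ 2n and a₁₁⁽ⁱ⁾ = a₂₁⁽ⁱ⁾ = 0 for all i < n while
a₂₂⁽ⁱ⁾ = 0 for i ≤ p̄ − n − 1, then det M(t) = t^{2n} + Σ_{i=p̄−n}^{n−1} a₂₂⁽ⁱ⁾ t^{n+i},
so 0 is a root of det M(t) of multiplicity at least p̄. -/
theorem stmt11 (n pbar : ℕ) (hn : n < pbar) (hp : pbar ≤ 2 * n)
    (A : Fin n → Matrix (Fin 2) (Fin 2) ℂ)
    (hcol : ∀ i : Fin n, A i 0 0 = 0 ∧ A i 1 0 = 0)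
    (h22 : ∀ i : Fin n, (i : ℕ) ≤ pbar - n - 1 → A i 1 1 = 0) :
    (((Polynomial.X : Polynomial ℂ) ^ n • (1 : Matrix (Fin 2) (Fin 2) (Polynomial ℂ)) +
        ∑ i : Fin n, (Polynomial.X : Polynomial ℂ) ^ (i : ℕ) • (A i).map Polynomial.C).det =
      (Polynomial.X : Polynomial ℂ) ^ (2 * n) +
        ∑ i ∈ Finset.univ.filter (fun i : Fin n => pbar - n ≤ (i : ℕ)),
          Polynomial.C (A i 1 1) * (Polynomial.X : Polynomial ℂ) ^ (n + (i : ℕ))) ∧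
    ((Polynomial.X : Polynomial ℂ) ^ pbar ∣
      ((Polynomial.X : Polynomial ℂ) ^ n • (1 : Matrix (Fin 2) (Fin 2) (Polynomial ℂ)) +
        ∑ i : Fin n, (Polynomial.X : Polynomial ℂ) ^ (i : ℕ) • (A i).map Polynomial.C).det) := by
  have key : (((Polynomial.X : Polynomial ℂ) ^ n • (1 : Matrix (Fin 2) (Fin 2) (Polynomial ℂ)) +
        ∑ i : Fin n, (Polynomial.X : Polynomial ℂ) ^ (i : ℕ) • (A i).map Polynomial.C).det =
      (Polynomial.X : Polynomial ℂ) ^ (2 * n) +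
        ∑ i ∈ Finset.univ.filter (fun i : Fin n => pbar - n ≤ (i : ℕ)),
          Polynomial.C (A i 1 1) * (Polynomial.X : Polynomial ℂ) ^ (n + (i : ℕ))) := by
    rw [Matrix.det_fin_two]
    simp only [Matrix.add_apply, Matrix.smul_apply, Matrix.one_apply, Matrix.sum_apply,
      Matrix.map_apply, smul_eq_mul, (hcol _).1, (hcol _).2, map_zero, mul_zero,
      Finset.sum_const_zero, add_zero, reduceIte, mul_one, one_ne_zero, zero_ne_one,
      if_false, if_true, mul_zero, zero_mul, sub_zero]
    rw [mul_add, ← pow_add, ← two_mul, Finset.mul_sum]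
    congr 1
    rw [Finset.sum_filter]
    apply Finset.sum_congr rfl
    intro i _
    by_cases h : pbar - n ≤ (i : ℕ)
    · rw [if_pos h, pow_add]; ring
    · rw [if_neg h, h22 i (by omega), map_zero, mul_zero, mul_zero]
  refine ⟨key, ?_⟩
  rw [key]
  apply dvd_add (pow_dvd_pow _ hp)
  apply Finset.dvd_sum
  intro i hi
  simp only [Finset.mem_filter] at hi
  exact Dvd.dvd.mul_left (pow_dvd_pow _ (by omega)) _
end

section
/- For every m ∈ ℕ with m ∉ {4, 16}, letting p be the unique integer with C(p−1,2) < m ≤ C(p,2), there exists an equivalence relation ∼ on {0,1,...,p−1} such that: (1) the number of pairs (x,y) with x < y and x ≁ y is exactly m; (2) {0} is a singleton equivalence class; (3) no equivalence class has more than ⌈p/2⌉ elements. -/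
/-!
Put `d = C(p, 2) - m`; the bound `C(p - 1, 2) < m` says `d ≤ p - 2`. Write `d = C(a, 2) + t` with
`t < a` (greedily), and partition `{0, …, p - 1}` into `{0}`, a block `{1, …, a}`, `t` pairs
following it, and singletons. Exactly `d` pairs are then equivalent. The classes have at most
`a ≤ ⌈p/2⌉` elements, and `a + 2t ≤ p - 1` points suffice, except for `(a, t, p) = (2, 1, 4)` and
`(3, 2, 7)`, which are `m = 4` and `m = 16`.
-/

open Finset

lemma choose_two_succ (n : ℕ) : (n + 1).choose 2 = n.choose 2 + n := by
  simp [Nat.choose_succ_succ', add_comm]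

lemma two_mul_choose_two (n : ℕ) : 2 * n.choose 2 = n * (n - 1) := by
  rw [Nat.choose_two_right, Nat.mul_div_cancel' (Nat.even_mul_pred_self n).two_dvd]

lemma exists_choose_two_add_of_lt (d : ℕ) : ∃ a t, t < a ∧ a.choose 2 + t = d := by
  induction d with
  | zero => exact ⟨1, 0, by simp⟩
  | succ d ih =>
    obtain ⟨a, t, hta, rfl⟩ := ih
    by_cases h : t + 1 < a
    · exact ⟨a, t + 1, h, by omega⟩
    · exact ⟨a + 1, 0, by omega, by rw [choose_two_succ]; omega⟩

lemma two_mul_le_succ_of_choose_two_add_two_le {a p : ℕ} (h : a.choose 2 + 2 ≤ p) :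
    2 * a ≤ p + 1 := by
  have := two_mul_choose_two a
  rcases le_or_gt a 2 with ha | ha
  · interval_cases a <;> omega
  · nlinarith [Nat.sub_add_cancel (by omega : 1 ≤ a)]

lemma add_two_mul_lt_of_choose_two_add_le {a t p : ℕ} (hta : t < a)
    (h : a.choose 2 + t + 2 ≤ p) (h4 : ¬(a = 2 ∧ t = 1 ∧ p = 4)) (h7 : ¬(a = 3 ∧ t = 2 ∧ p = 7)) :
    a + 2 * t < p := by
  have := two_mul_choose_two a
  rcases le_or_gt a 3 with ha | ha
  · interval_cases a <;> omega
  · nlinarith [Nat.sub_add_cancel (by omega : 1 ≤ a)]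

/-- The least element of the class of `i` in the partition of `ℕ` into `{0}`, the block `[1, a]`,
the pairs `{a + 2j + 1, a + 2j + 2}` for `j < t`, and singletons. -/
def blockPairRep (a t i : ℕ) : ℕ :=
  if i = 0 then 0 else if i ≤ a then 1 else if i ≤ a + 2 * t then i - (i - a - 1) % 2 else i

section BlockPairRep

variable {a t : ℕ}

lemma blockPairRep_eq_zero_iff {i : ℕ} : blockPairRep a t i = 0 ↔ i = 0 := by
  unfold blockPairRep; split_ifs <;> grind

lemma blockPairRep_le (i : ℕ) : blockPairRep a t i ≤ i := by
  unfold blockPairRep; split_ifs <;> omega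

lemma lt_blockPairRep_add (hta : t < a) (i : ℕ) : i < blockPairRep a t i + a := by
  unfold blockPairRep; split_ifs <;> omega

lemma filter_blockPairRep_eq {p : ℕ} (h : a + 2 * t < p) :
    {q ∈ range p ×ˢ range p | q.1 < q.2 ∧ blockPairRep a t q.1 = blockPairRep a t q.2} =
      {q ∈ Icc 1 a ×ˢ Icc 1 a | q.1 < q.2} ∪
        (range t).image fun j ↦ (a + 2 * j + 1, a + 2 * j + 2) := by
  ext ⟨x, y⟩
  simp only [mem_filter, mem_product, mem_range, mem_Icc, mem_union, mem_image, Prod.mk.injEq]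
  unfold blockPairRep
  constructor
  · rintro ⟨-, hxy, hrep⟩
    split_ifs at hrep
    all_goals first
      | omega
      | (left; omega)
      | (right; exact ⟨(x - a - 1) / 2, by omega, by omega, by omega⟩)
  · rintro (⟨hblock, hxy⟩ | ⟨j, hj, rfl, rfl⟩) <;>
      refine ⟨by omega, by omega, ?_⟩ <;> split_ifs <;> omega

lemma card_filter_blockPairRep_eq {p : ℕ} (h : a + 2 * t < p) :
    #{q ∈ range p ×ˢ range p | q.1 < q.2 ∧ blockPairRep a t q.1 = blockPairRep a t q.2} =
      a.choose 2 + t := by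
  have hdisj : Disjoint {q ∈ Icc 1 a ×ˢ Icc 1 a | q.1 < q.2}
      ((range t).image fun j ↦ (a + 2 * j + 1, a + 2 * j + 2)) := by
    simp only [disjoint_left, mem_filter, mem_product, mem_Icc, mem_image, mem_range]
    rintro _ ⟨⟨-, -, hy⟩, -⟩ ⟨j, -, rfl⟩
    omega
  have hinj : Function.Injective fun j ↦ (a + 2 * j + 1, a + 2 * j + 2) := by
    intro i j hij
    simp only [Prod.mk.injEq] at hij
    omega
  rw [filter_blockPairRep_eq h, card_union_of_disjoint hdisj, card_product_filter_lt,
    card_image_of_injective _ hinj, Nat.card_Icc, card_range, Nat.add_sub_cancel]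

lemma card_filter_blockPairRep_ne_add {p : ℕ} (h : a + 2 * t < p) :
    #{q ∈ range p ×ˢ range p | q.1 < q.2 ∧ blockPairRep a t q.1 ≠ blockPairRep a t q.2} +
      (a.choose 2 + t) = p.choose 2 := by
  rw [← card_filter_blockPairRep_eq h, add_comm, ← filter_filter, ← filter_filter,
    card_filter_add_card_filter_not, card_product_filter_lt, card_range]

lemma natCard_blockPairRep_class_le (hta : t < a) {p : ℕ} (x : Fin p) :
    Nat.card {y : Fin p // blockPairRep a t x = blockPairRep a t y} ≤ a := by
  rw [Nat.card_eq_fintype_card, Fintype.card_subtype]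
  calc _ ≤ #(Ico (blockPairRep a t x) (blockPairRep a t x + a)) := by
        refine card_le_card_of_injOn Fin.val (fun y hy ↦ ?_) Fin.val_injective.injOn
        simp only [coe_filter, Set.mem_ofPred_eq] at hy
        have := blockPairRep_le (a := a) (t := t) y
        have := lt_blockPairRep_add hta y
        simp only [coe_Ico, Set.mem_Ico]
        omega
    _ = a := by simp

end BlockPairRep

lemma Fin.natCard_subtype_prod_eq_card_filter (p : ℕ) (P : ℕ → ℕ → Prop) [DecidableRel P] :
    Nat.card {q : Fin p × Fin p // P q.1 q.2} = #{q ∈ range p ×ˢ range p | P q.1 q.2} := by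
  rw [Nat.card_eq_fintype_card, Fintype.card_subtype]
  refine card_bij (fun q _ ↦ (q.1.val, q.2.val)) ?_ ?_ ?_
  · simp
  · simp [Prod.ext_iff, Fin.ext_iff]
  · simp only [mem_filter, mem_product, mem_range, mem_univ, true_and, exists_prop, Prod.exists,
      Prod.ext_iff]
    rintro ⟨x, y⟩ ⟨⟨hx, hy⟩, hP⟩
    exact ⟨⟨x, hx⟩, ⟨y, hy⟩, hP, rfl, rfl⟩

theorem stmt13_general (m p : ℕ) (hm4 : m ≠ 4) (hm16 : m ≠ 16)
    (hp1 : Nat.choose (p - 1) 2 < m) (hp2 : m ≤ Nat.choose p 2) :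
    ∃ s : Setoid (Fin p),
      Nat.card {q : Fin p × Fin p // q.1 < q.2 ∧ ¬ s.r q.1 q.2} = m ∧
      (∀ x y : Fin p, (x : ℕ) = 0 → (s.r x y ↔ x = y)) ∧
      (∀ x : Fin p, Nat.card {y : Fin p // s.r x y} ≤ (p + 1) / 2) := by
  have hdefect : p.choose 2 - m + 2 ≤ p := by
    obtain _ | n := p
    · simp only [Nat.choose_zero_succ] at hp2; omega
    · rw [choose_two_succ] at hp2 ⊢
      simp only [Nat.add_sub_cancel] at hp1
      omega
  obtain ⟨a, t, hta, hd⟩ := exists_choose_two_add_of_lt (p.choose 2 - m)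
  have hwidth := two_mul_le_succ_of_choose_two_add_two_le (by omega : a.choose 2 + 2 ≤ p)
  have hfit : a + 2 * t < p := by
    refine add_two_mul_lt_of_choose_two_add_le hta (by omega) ?_ ?_ <;>
      rintro ⟨rfl, rfl, rfl⟩ <;> simp only [Nat.choose, add_zero, Nat.reduceAdd] at hd <;> omega
  refine ⟨Setoid.ker fun x : Fin p ↦ blockPairRep a t x, ?_, fun x y hx ↦ ?_, fun x ↦ ?_⟩
  · have := card_filter_blockPairRep_ne_add hfit
    rw [← Fin.natCard_subtype_prod_eq_card_filter p
      (fun x y ↦ x < y ∧ blockPairRep a t x ≠ blockPairRep a t y)] at this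
    simp only [Setoid.ker_def, Fin.lt_def, ne_eq] at this ⊢
    omega
  · rw [Setoid.ker_def, hx, Fin.ext_iff, hx, blockPairRep_eq_zero_iff.2 rfl, eq_comm,
      blockPairRep_eq_zero_iff, eq_comm]
  · exact (natCard_blockPairRep_class_le hta x).trans (by omega)

/-- For m ∉ {4,16} (m ≥ 1), with p the integer satisfying
C(p−1,2) < m ≤ C(p,2), there is an equivalence relation on {0,…,p−1} with exactly m
non-equivalent pairs x < y, with 0 in a singleton class, and no class of more than
⌈p/2⌉ elements. -/
theorem stmt13 (m p : ℕ) (hm : 1 ≤ m) (hm4 : m ≠ 4) (hm16 : m ≠ 16)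
    (hp1 : Nat.choose (p - 1) 2 < m) (hp2 : m ≤ Nat.choose p 2) :
    ∃ s : Setoid (Fin p),
      Nat.card {q : Fin p × Fin p // q.1 < q.2 ∧ ¬ s.r q.1 q.2} = m ∧
      (∀ x y : Fin p, (x : ℕ) = 0 → (s.r x y ↔ x = y)) ∧
      (∀ x : Fin p, Nat.card {y : Fin p // s.r x y} ≤ (p + 1) / 2) :=
  stmt13_general m p hm4 hm16 hp1 hp2
end

section
/- Let n ≥ 4 and consider the equation over M₂(ℂ) with polynomial matrix diag((t−3)(t+3)(t−1)(t+1)^{n−3}, (t−4)(t+4)(t−2)(t+2)^{n−3}). This equation has exactly 16 solutions, all diagonalizable. -/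
/-!
All coefficients `Aᵢ` are diagonal, so the `k`-th row of `Xⁿ + ∑ Aᵢ Xⁱ` is the `k`-th row of
`pₖ(X)`, where `p₀, p₁` are the (coprime) diagonal entries of the polynomial matrix.
If `X₀₁ ≠ 0`, then `X p₀(X) = p₀(X) X` carries the vanishing of row 0 of `p₀(X)` over to row 1,
and row 1 of `p₀(X)` and of `p₁(X)` cannot both vanish by a Bézout identity; likewise for `X₁₀`.
Hence every solution is `diag(a, b)` with `p₀(a) = 0 = p₁(b)`, which gives `4 · 4` solutions.
-/

open Polynomial Matrix

section
variable {R : Type*} [CommRing R] {ι : Type*} [Fintype ι] [DecidableEq ι]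

theorem coeff_sum_fin_C_mul_X_pow {m : ℕ} (a : Fin m → R) (j : Fin m) :
    (∑ i : Fin m, C (a i) * X ^ (i : ℕ)).coeff j = a j := by
  simp [coeff_C_mul, coeff_X_pow, Fin.val_inj]

theorem row_pow_add_sum_mul_pow {m : ℕ} (A : Fin m → Matrix ι ι R) (p : ι → R[X])
    (hA : (X : R[X]) ^ m • (1 : Matrix ι ι R[X]) + ∑ i : Fin m, (X : R[X]) ^ (i : ℕ) • (A i).map C
      = diagonal p)
    (Y : Matrix ι ι R) (k : ι) :
    (Y ^ m + ∑ i : Fin m, A i * Y ^ (i : ℕ)) k = aeval Y (p k) k := by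
  have hent (l : ι) :
      (if k = l then X ^ m else 0) + ∑ i : Fin m, C (A i k l) * X ^ (i : ℕ) = diagonal p k l := by
    simpa [one_apply, Matrix.sum_apply, X_pow_mul] using congrFun₂ hA k l
  have hoff (i : Fin m) (l : ι) (hl : k ≠ l) : A i k l = 0 := by
    have h := congrArg (coeff · i) (hent l)
    simp only [if_neg hl, zero_add, diagonal_apply_ne _ hl] at h
    rwa [coeff_sum_fin_C_mul_X_pow, coeff_zero] at h
  have hp : p k = X ^ m + ∑ i : Fin m, C (A i k k) * X ^ (i : ℕ) := by simpa using (hent k).symm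
  funext l
  simp only [hp, map_add, map_sum, map_mul, map_pow, aeval_C, aeval_X,
    Algebra.algebraMap_eq_smul_one, smul_mul_assoc, one_mul, Matrix.add_apply, Matrix.sum_apply,
    Matrix.smul_apply, smul_eq_mul]
  congr 1
  refine Finset.sum_congr rfl fun i _ => ?_
  rw [mul_apply, Finset.sum_eq_single k (fun j _ hj => by rw [hoff i j hj.symm, zero_mul])
    (by simp)]

theorem setOf_pow_add_sum_mul_pow_eq_zero {m : ℕ} (A : Fin m → Matrix ι ι R) (p : ι → R[X])
    (hA : (X : R[X]) ^ m • (1 : Matrix ι ι R[X]) + ∑ i : Fin m, (X : R[X]) ^ (i : ℕ) • (A i).map C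
      = diagonal p) :
    {Y : Matrix ι ι R | Y ^ m + ∑ i : Fin m, A i * Y ^ (i : ℕ) = 0} =
      {Y : Matrix ι ι R | ∀ k, aeval Y (p k) k = 0} := by
  ext Y
  simp only [Set.mem_ofPred_eq, ← row_pow_add_sum_mul_pow A p hA Y]
  exact funext_iff

theorem aeval_diagonal (d : ι → R) (p : R[X]) :
    aeval (diagonal d) p = diagonal fun i => p.eval (d i) := by
  rw [← diagonalAlgHom_apply (R := R), aeval_algHom_apply, aeval_pi_apply]
  simp

theorem commute_aeval_self {A : Type*} [Ring A] [Algebra R A] (a : A) (p : R[X]) :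
    Commute a (aeval a p) := by
  simpa using (Commute.all X p).map (aeval a)

theorem row_aeval_ne_zero_of_isCoprime [Nontrivial R] {Y : Matrix ι ι R} {p q : R[X]}
    (hpq : IsCoprime p q) {i : ι} (hp : aeval Y p i = 0) : aeval Y q i ≠ 0 := by
  intro hq
  obtain ⟨a, b, hab⟩ := hpq
  have h1 := congrFun₂ (congrArg (aeval Y) hab) i i
  -- row `i` of `p(Y) a(Y)` is `p(Y) i ᵥ* a(Y)`, so put `p` and `q` on the left
  rw [mul_comm a, mul_comm b] at h1
  simp [mul_apply, congrFun hp, congrFun hq] at h1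

theorem row_eq_zero_of_commute [NoZeroDivisors R] {Y M : Matrix (Fin 2) (Fin 2) R}
    (hYM : Commute Y M) {i j : Fin 2} (hij : i ≠ j) (hY : Y i j ≠ 0) (hM : M i = 0) : M j = 0 := by
  funext l
  have h := congrFun₂ hYM.eq i l
  have hMl := congrFun hM
  fin_cases i <;> fin_cases j <;> simp_all [mul_apply, Fin.sum_univ_two]

variable [IsDomain R]

theorem isDiag_of_row_aeval_eq_zero {Y : Matrix (Fin 2) (Fin 2) R} {p q : R[X]}
    (hpq : IsCoprime p q) (hp : aeval Y p 0 = 0) (hq : aeval Y q 1 = 0) : Y.IsDiag := by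
  have h01 : Y 0 1 = 0 := by
    by_contra hY
    exact row_aeval_ne_zero_of_isCoprime hpq
      (row_eq_zero_of_commute (commute_aeval_self Y p) zero_ne_one hY hp) hq
  have h10 : Y 1 0 = 0 := by
    by_contra hY
    exact row_aeval_ne_zero_of_isCoprime hpq hp
      (row_eq_zero_of_commute (commute_aeval_self Y q) one_ne_zero hY hq)
  intro i j hij
  fin_cases i <;> fin_cases j <;> simp_all

theorem setOf_row_aeval_eq_zero {p q : R[X]} (hpq : IsCoprime p q) :
    {Y : Matrix (Fin 2) (Fin 2) R | aeval Y p 0 = 0 ∧ aeval Y q 1 = 0} =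
      (fun x : R × R => diagonal ![x.1, x.2]) '' {x | p.IsRoot x} ×ˢ {x | q.IsRoot x} := by
  have hdiag (a b : R) : aeval (diagonal ![a, b]) p 0 = 0 ∧
      aeval (diagonal ![a, b]) q 1 = 0 ↔ p.IsRoot a ∧ q.IsRoot b := by
    simp [aeval_diagonal, funext_iff, Fin.forall_fin_two]
  ext Y
  constructor
  · rintro ⟨hp, hq⟩
    have hY : diagonal ![Y 0 0, Y 1 1] = Y := by
      rw [← (isDiag_of_row_aeval_eq_zero hpq hp hq).diagonal_diag]
      congr 1
      ext i
      fin_cases i <;> rfl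
    exact ⟨(Y 0 0, Y 1 1), (hdiag _ _).1 (by rw [hY]; exact ⟨hp, hq⟩), hY⟩
  · rintro ⟨⟨a, b⟩, hab, rfl⟩
    exact (hdiag a b).2 hab

theorem ncard_setOf_row_aeval_eq_zero {p q : R[X]} (hpq : IsCoprime p q) :
    {Y : Matrix (Fin 2) (Fin 2) R | aeval Y p 0 = 0 ∧ aeval Y q 1 = 0}.ncard =
      {x | p.IsRoot x}.ncard * {x | q.IsRoot x}.ncard := by
  have hinj : Function.Injective fun x : R × R => diagonal ![x.1, x.2] := by
    intro x y h
    simpa [Prod.ext_iff] using diagonal_injective h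
  rw [setOf_row_aeval_eq_zero hpq, Set.ncard_image_of_injective _ hinj, Set.ncard_prod]

end

theorem isCoprime_of_disjoint_setOf_isRoot {K : Type*} [Field K] [IsAlgClosed K] {p q : K[X]}
    (h : Disjoint {x | p.IsRoot x} {x | q.IsRoot x}) : IsCoprime p q :=
  (isCoprime_iff_aeval_ne_zero_of_isAlgClosed K K p q).2 fun a =>
    not_and_or.1 fun ⟨hp, hq⟩ => Set.disjoint_left.1 h (by simpa using hp) (by simpa using hq)

/-- For n ≥ 4, the equation over M₂(ℂ) with polynomial matrix
diag((t−3)(t+3)(t−1)(t+1)^{n−3}, (t−4)(t+4)(t−2)(t+2)^{n−3}) has exactly 16 solutions,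
all diagonalizable. -/
theorem stmt17 (n : ℕ) (hn : 4 ≤ n) (A : Fin n → Matrix (Fin 2) (Fin 2) ℂ)
    (hA : (Polynomial.X : Polynomial ℂ) ^ n • (1 : Matrix (Fin 2) (Fin 2) (Polynomial ℂ)) +
        ∑ i : Fin n, (Polynomial.X : Polynomial ℂ) ^ (i : ℕ) • (A i).map Polynomial.C =
      Matrix.diagonal
        ![(Polynomial.X - 3) * (Polynomial.X + 3) *
            (Polynomial.X - 1) * (Polynomial.X + 1) ^ (n - 3),
          (Polynomial.X - 4) * (Polynomial.X + 4) *
            (Polynomial.X - 2) * (Polynomial.X + 2) ^ (n - 3)]) :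
    Nat.card {X : Matrix (Fin 2) (Fin 2) ℂ |
        X ^ n + ∑ i : Fin n, A i * X ^ (i : ℕ) = 0} = 16 ∧
    ∀ X : Matrix (Fin 2) (Fin 2) ℂ, X ^ n + ∑ i : Fin n, A i * X ^ (i : ℕ) = 0 →
      ∃ P : Matrix (Fin 2) (Fin 2) ℂ, IsUnit P.det ∧ (P⁻¹ * X * P).IsDiag := by
  set p : ℂ[X] := (X - 3) * (X + 3) * (X - 1) * (X + 1) ^ (n - 3)
  set q : ℂ[X] := (X - 4) * (X + 4) * (X - 2) * (X + 2) ^ (n - 3)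
  have hn3 : n - 3 ≠ 0 := by omega
  have hp : {x | p.IsRoot x} = {3, -3, 1, -1} := by
    ext x; simp [p, sub_eq_zero, add_eq_zero_iff_eq_neg, hn3, or_assoc]
  have hq : {x | q.IsRoot x} = {4, -4, 2, -2} := by
    ext x; simp [q, sub_eq_zero, add_eq_zero_iff_eq_neg, hn3, or_assoc]
  have hpq : IsCoprime p q := isCoprime_of_disjoint_setOf_isRoot (by rw [hp, hq]; norm_num)
  have hsol : {X : Matrix (Fin 2) (Fin 2) ℂ | X ^ n + ∑ i : Fin n, A i * X ^ (i : ℕ) = 0} =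
      {Y : Matrix (Fin 2) (Fin 2) ℂ | aeval Y p 0 = 0 ∧ aeval Y q 1 = 0} := by
    simp [setOf_pow_add_sum_mul_pow_eq_zero A ![p, q] hA, Fin.forall_fin_two]
  refine ⟨?_, fun Y hY => ⟨1, by simp, ?_⟩⟩
  · rw [Nat.card_coe_set_eq, hsol, ncard_setOf_row_aeval_eq_zero hpq, hp, hq,
      Set.ncard_insert_of_notMem, Set.ncard_insert_of_notMem, Set.ncard_pair,
      Set.ncard_insert_of_notMem, Set.ncard_insert_of_notMem, Set.ncard_pair] <;> norm_num
  · obtain ⟨x, -, rfl⟩ := (hsol.trans (setOf_row_aeval_eq_zero hpq)).subset hY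
    simp
end
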